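/- arXiv:2304.01112 — 2 statements merged into one kernel-verified Lean document; each statement's English description precedes it below -/
import Mathlib

section
/- S(2) = (ln(4π) - 1 - γ)/2, where S(a) = Σ_{n=1}^∞ [ln(n/a) - a/(2n) - ψ(n/a)], ψ is the digamma function, and γ is the Euler–Mascheroni constant. -/
/-!
Group the terms `n = 2k + 1` and `n = 2k + 2`. The duplication formula
`ψ(k + 1/2) + ψ(k + 1) = 2 ψ(2k + 1) - 2 log 2`, together with `ψ(m + 1) = H_m - γ`, makes every
term, hence every partial sum up to `2N`, explicit in harmonic numbers and `log (2N)!`.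
Stirling's formula and the bounds `1/(2(m+1)) ≤ H_m - log m - γ ≤ 1/(2m)`, obtained from
sequences that are monotone with limit `0`, then give the limit; the same bounds show that the
terms are `O(1/n²)`, so the series converges absolutely.
-/

open Real

/-- The digamma function `ψ(x) = Γ'(x)/Γ(x) = d(log Γ)/dx`. -/
noncomputable def digamma (x : ℝ) : ℝ := deriv (fun y : ℝ => Real.log (Real.Gamma y)) x

/-- `S(a) = Σ_{n=1}^∞ [ln(n/a) - a/(2n) - ψ(n/a)]`. -/
noncomputable def S (a : ℝ) : ℝ :=
  ∑' n : ℕ+, (Real.log ((n : ℝ) / a) - a / (2 * (n : ℝ)) - digamma ((n : ℝ) / a))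

open Filter Topology Finset

local notation "γ" => eulerMascheroniConstant

lemma hasDerivAt_log_Gamma {x : ℝ} (hx : 0 < x) :
    HasDerivAt (fun y ↦ log (Gamma y)) (digamma x) x :=
  ((differentiableOn_Gamma_Ioi.differentiableAt (Ioi_mem_nhds hx)).log
    (Gamma_pos_of_pos hx).ne').hasDerivAt

lemma digamma_nat_add_one (n : ℕ) : digamma (n + 1) = harmonic n - γ := by
  have hpos : (0 : ℝ) < n + 1 := n.cast_add_one_pos
  have hlog := ((differentiableOn_Gamma_Ioi.differentiableAt (Ioi_mem_nhds hpos)).hasDerivAt.log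
    (Gamma_pos_of_pos hpos).ne').deriv
  rw [digamma, hlog, deriv_Gamma_nat, Gamma_nat_eq_factorial,
    mul_div_cancel_left₀ _ (by positivity)]
  ring

/-- The logarithmic derivative of Legendre's duplication formula. -/
lemma digamma_add_digamma_add_half {x : ℝ} (hx : 0 < x) :
    digamma x + digamma (x + 1 / 2) = 2 * digamma (2 * x) - 2 * log 2 := by
  have hlhs : HasDerivAt (fun y ↦ log (Gamma y) + log (Gamma (y + 1 / 2)))
      (digamma x + digamma (x + 1 / 2)) x :=
    (hasDerivAt_log_Gamma hx).add
      ((hasDerivAt_log_Gamma (by positivity : 0 < x + 1 / 2)).comp_add_const x (1 / 2))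
  have hrhs : HasDerivAt (fun y ↦ log (Gamma (2 * y)) + (1 - 2 * y) * log 2 + log √π)
      (2 * digamma (2 * x) - 2 * log 2) x := by
    have h2 : HasDerivAt (fun y : ℝ ↦ 2 * y) 2 x := by simpa using (hasDerivAt_id x).const_mul 2
    refine ((((hasDerivAt_log_Gamma (by positivity : 0 < 2 * x)).comp x h2).add
      ((h2.const_sub 1).mul_const (log 2))).add_const (log √π)).congr_deriv ?_
    ring
  refine hlhs.unique (hrhs.congr_of_eventuallyEq ?_)
  filter_upwards [eventually_gt_nhds hx] with y hy
  rw [← log_mul (Gamma_pos_of_pos hy).ne' (Gamma_pos_of_pos (by positivity)).ne',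
    Gamma_mul_Gamma_add_half, log_mul (by positivity) (by positivity),
    log_mul (Gamma_pos_of_pos (by positivity)).ne' (by positivity), log_rpow two_pos]

lemma log_one_add_inv_le {x : ℝ} (hx : 0 < x) : log (1 + x⁻¹) ≤ (x⁻¹ + (x + 1)⁻¹) / 2 := by
  have hpos : 0 < 1 + x⁻¹ := by positivity
  calc log (1 + x⁻¹) ≤ sinh (log (1 + x⁻¹)) :=
        self_le_sinh_iff.mpr (log_nonneg (le_add_of_nonneg_right (inv_nonneg.mpr hx.le)))
    _ = (x⁻¹ + (x + 1)⁻¹) / 2 := by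
        rw [sinh_log hpos]; field_simp; ring

lemma two_div_le_log_one_add_inv {x : ℝ} (hx : 0 < x) : 2 / (2 * x + 1) ≤ log (1 + x⁻¹) := by
  refine le_of_eq_of_le ?_ (le_hasSum (hasSum_log_one_add_inv hx) 0 fun _ _ ↦ by positivity)
  ring

noncomputable def harmonicRemainder (n : ℕ) : ℝ := harmonic n - log n - γ

lemma tendsto_harmonicRemainder : Tendsto harmonicRemainder atTop (𝓝 0) := by
  have h := tendsto_harmonic_sub_log.sub_const γ
  rwa [sub_self] at h

lemma harmonicRemainder_succ {n : ℕ} (hn : n ≠ 0) :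
    harmonicRemainder (n + 1) = harmonicRemainder n + (n + 1 : ℝ)⁻¹ - log (1 + (n : ℝ)⁻¹) := by
  have hn' : (0 : ℝ) < n := by positivity
  have h : 1 + (n : ℝ)⁻¹ = (n + 1) / n := by field_simp
  rw [harmonicRemainder, harmonicRemainder, harmonic_succ, h, log_div (by positivity) hn'.ne']
  push_cast
  ring

lemma tendsto_harmonicRemainder_add_one_sub_inv (c : ℝ) :
    Tendsto (fun n : ℕ ↦ harmonicRemainder (n + 1) - (2 * (n + c))⁻¹) atTop (𝓝 0) := by
  have hinv : Tendsto (fun n : ℕ ↦ (2 * (n + c))⁻¹) atTop (𝓝 0) :=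
    ((tendsto_atTop_add_const_right _ c tendsto_natCast_atTop_atTop).const_mul_atTop
      two_pos).inv_tendsto_atTop
  simpa using (tendsto_harmonicRemainder.comp (tendsto_add_atTop_nat 1)).sub hinv

lemma harmonicRemainder_le {n : ℕ} (hn : n ≠ 0) : harmonicRemainder n ≤ (2 * n : ℝ)⁻¹ := by
  obtain ⟨m, rfl⟩ := Nat.exists_eq_add_one_of_ne_zero hn
  have hmono : Monotone fun k : ℕ ↦ harmonicRemainder (k + 1) - (2 * ((k : ℝ) + 1))⁻¹ :=
    monotone_nat_of_le_succ fun k ↦ by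
      have hlog := log_one_add_inv_le (by positivity : (0 : ℝ) < k + 1)
      simp only [harmonicRemainder_succ k.add_one_ne_zero]
      push_cast
      simp only [mul_inv] at hlog ⊢
      linarith
  simpa [sub_nonpos] using hmono.ge_of_tendsto (tendsto_harmonicRemainder_add_one_sub_inv 1) m

lemma inv_le_harmonicRemainder {n : ℕ} (hn : n ≠ 0) :
    (2 * (n + 1) : ℝ)⁻¹ ≤ harmonicRemainder n := by
  obtain ⟨m, rfl⟩ := Nat.exists_eq_add_one_of_ne_zero hn
  have hanti : Antitone fun k : ℕ ↦ harmonicRemainder (k + 1) - (2 * ((k : ℝ) + 2))⁻¹ :=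
    antitone_nat_of_succ_le fun k ↦ by
      have hk : (0 : ℝ) < k + 1 := by positivity
      have hlog := two_div_le_log_one_add_inv hk
      have hrat : ((k : ℝ) + 1 + 1)⁻¹ + (2 * ((k : ℝ) + 2))⁻¹ - (2 * ((k : ℝ) + 1 + 2))⁻¹ ≤
          2 / (2 * (k + 1) + 1) := by
        field_simp
        nlinarith
      simp only [harmonicRemainder_succ k.add_one_ne_zero]
      push_cast
      linarith
  have hle := hanti.le_of_tendsto (tendsto_harmonicRemainder_add_one_sub_inv 2) m
  rw [show (m : ℝ) + 2 = m + 1 + 1 by ring] at hle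
  push_cast
  linarith

lemma tendsto_mul_harmonicRemainder :
    Tendsto (fun n : ℕ ↦ n * harmonicRemainder n) atTop (𝓝 (1 / 2)) := by
  have hlow : Tendsto (fun n : ℕ ↦ n / (n + 1 : ℝ) / 2) atTop (𝓝 (1 / 2)) :=
    (tendsto_natCast_div_add_atTop (1 : ℝ)).div_const 2
  refine tendsto_of_tendsto_of_tendsto_of_le_of_le' hlow tendsto_const_nhds ?_ ?_
  all_goals filter_upwards [eventually_ne_atTop 0] with n hn
  · refine le_of_eq_of_le ?_ (mul_le_mul_of_nonneg_left (inv_le_harmonicRemainder hn)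
      n.cast_nonneg)
    field_simp
  · refine (mul_le_mul_of_nonneg_left (harmonicRemainder_le hn) n.cast_nonneg).trans_eq ?_
    have : (n : ℝ) ≠ 0 := by exact_mod_cast hn
    field_simp

noncomputable def summandTwo (n : ℕ) : ℝ := log (n / 2) - 2 / (2 * n) - digamma (n / 2)

lemma summandTwo_two_mul_add_one (k : ℕ) :
    summandTwo (2 * k + 1) = log (k + 1 / 2) - (2 * k + 1 : ℝ)⁻¹ + γ + 2 * log 2
      - 2 * harmonic (2 * k) + harmonic k := by
  have hdup := digamma_add_digamma_add_half (by positivity : (0 : ℝ) < k + 1 / 2)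
  rw [show (k : ℝ) + 1 / 2 + 1 / 2 = k + 1 by ring,
    show 2 * ((k : ℝ) + 1 / 2) = (2 * k : ℕ) + 1 by push_cast; ring,
    digamma_nat_add_one, digamma_nat_add_one] at hdup
  rw [summandTwo, show ((2 * k + 1 : ℕ) : ℝ) / 2 = k + 1 / 2 by push_cast; ring]
  push_cast
  rw [show (2 : ℝ) / (2 * (2 * k + 1)) = (2 * k + 1 : ℝ)⁻¹ by field_simp]
  linarith

lemma summandTwo_two_mul_add_two (k : ℕ) :
    summandTwo (2 * k + 2) = log (k + 1) + (2 * (k + 1) : ℝ)⁻¹ + γ - harmonic (k + 1) := by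
  rw [summandTwo, show ((2 * k + 2 : ℕ) : ℝ) / 2 = k + 1 by push_cast; ring,
    digamma_nat_add_one, harmonic_succ]
  push_cast
  field_simp
  ring

lemma summandTwo_two_mul_add_one_eq_harmonicRemainder {k : ℕ} (hk : k ≠ 0) :
    summandTwo (2 * k + 1) = log (1 + (2 * k : ℝ)⁻¹) - (2 * k + 1 : ℝ)⁻¹
      - 2 * harmonicRemainder (2 * k) + harmonicRemainder k := by
  have hk' : (0 : ℝ) < k := by positivity
  have hlog : log (k + 1 / 2) = log (1 + (2 * k : ℝ)⁻¹) + log k := by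
    rw [← log_mul (by positivity) hk'.ne']
    congr 1
    field_simp
  rw [summandTwo_two_mul_add_one, hlog, harmonicRemainder, harmonicRemainder]
  push_cast
  rw [log_mul two_ne_zero hk'.ne']
  ring

lemma summandTwo_two_mul_add_two_eq_harmonicRemainder (k : ℕ) :
    summandTwo (2 * k + 2) = (2 * (k + 1) : ℝ)⁻¹ - harmonicRemainder (k + 1) := by
  rw [summandTwo_two_mul_add_two, harmonicRemainder]
  push_cast
  ring

lemma abs_summandTwo_le {n : ℕ} (hn : 2 ≤ n) : |summandTwo n| ≤ 3 / n ^ 2 := by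
  obtain ⟨k, rfl | rfl⟩ := n.even_or_odd'
  · obtain ⟨j, rfl⟩ := Nat.exists_eq_add_one_of_ne_zero (by omega : k ≠ 0)
    have hup := harmonicRemainder_le j.add_one_ne_zero
    have hlow := inv_le_harmonicRemainder j.add_one_ne_zero
    rw [show 2 * (j + 1) = 2 * j + 2 by ring, summandTwo_two_mul_add_two_eq_harmonicRemainder,
      abs_le]
    push_cast at hup hlow ⊢
    have hrat : (2 * ((j : ℝ) + 1))⁻¹ - (2 * ((j : ℝ) + 1 + 1))⁻¹ ≤ 3 / (2 * j + 2) ^ 2 := by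
      field_simp
      nlinarith
    constructor <;> linarith [show (0 : ℝ) ≤ 3 / (2 * j + 2) ^ 2 by positivity]
  · have hk : k ≠ 0 := by omega
    have hup := harmonicRemainder_le hk
    have hlow := inv_le_harmonicRemainder hk
    have hup2 := harmonicRemainder_le (by omega : 2 * k ≠ 0)
    have hlow2 := inv_le_harmonicRemainder (by omega : 2 * k ≠ 0)
    have hpos : (0 : ℝ) < 1 + (2 * (k : ℝ))⁻¹ := by positivity
    have hlogup := log_le_sub_one_of_pos hpos
    have hloglow := one_sub_inv_le_log_of_pos hpos
    rw [summandTwo_two_mul_add_one_eq_harmonicRemainder hk, abs_le]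
    push_cast at hup2 hlow2 ⊢
    have hk1 : (1 : ℝ) ≤ k := by exact_mod_cast Nat.one_le_iff_ne_zero.mpr hk
    set x : ℝ := (k : ℝ)
    have hinv : 1 - (1 + (2 * x)⁻¹)⁻¹ = (2 * x + 1)⁻¹ := by field_simp; ring
    have hhalf : 2 * (2 * (2 * x))⁻¹ = (2 * x)⁻¹ := by field_simp
    have hhalf' : 2 * (2 * (2 * x + 1))⁻¹ = (2 * x + 1)⁻¹ := by field_simp
    have hlowrat : -(3 / (2 * x + 1) ^ 2) ≤ -(2 * x)⁻¹ + (2 * (x + 1))⁻¹ := by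
      field_simp
      nlinarith
    have huprat : 2 * (2 * x)⁻¹ - 2 * (2 * x + 1)⁻¹ ≤ 3 / (2 * x + 1) ^ 2 := by
      field_simp
      nlinarith
    constructor <;> linarith

lemma summable_summandTwo : Summable summandTwo := by
  refine ((summable_one_div_nat_pow.mpr one_lt_two).mul_left 3).of_norm_bounded_eventually_nat ?_
  filter_upwards [eventually_ge_atTop 2] with n hn
  simpa [div_eq_mul_inv] using abs_summandTwo_le hn

lemma sum_range_two_mul_summandTwo (N : ℕ) :
    ∑ n ∈ range (2 * N), summandTwo (n + 1) =
      log (2 * N).factorial + 2 * N * (1 + γ - harmonic (2 * N)) - harmonic N / 2 := by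
  induction N with
  | zero => simp
  | succ N ih =>
    rw [show 2 * (N + 1) = 2 * N + 1 + 1 by ring, sum_range_succ, sum_range_succ, ih,
      summandTwo_two_mul_add_one, summandTwo_two_mul_add_two, Nat.factorial_succ,
      Nat.factorial_succ, harmonic_succ, harmonic_succ, harmonic_succ]
    push_cast
    have hodd : log (N + 1 / 2 : ℝ) = log (2 * N + 1) - log 2 := by
      rw [← log_div (by positivity) two_ne_zero]; ring_nf
    have heven : log (2 * N + 1 + 1 : ℝ) = log 2 + log (N + 1) := by
      rw [← log_mul two_ne_zero (by positivity)]; ring_nf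
    rw [log_mul (by positivity) (by positivity), log_mul (by positivity) (by positivity), hodd,
      heven]
    field_simp
    ring

lemma sum_range_two_mul_summandTwo_eq_stirlingSeq {N : ℕ} (hN : N ≠ 0) :
    ∑ n ∈ range (2 * N), summandTwo (n + 1) = log (Stirling.stirlingSeq (2 * N)) + log 2
      - γ / 2 - harmonicRemainder N / 2 - 2 * N * harmonicRemainder (2 * N) := by
  have hN' : (N : ℝ) ≠ 0 := by exact_mod_cast hN
  have hstirling := Stirling.log_stirlingSeq_formula (2 * N)
  push_cast at hstirling
  rw [log_div (by positivity) (exp_ne_zero 1), log_exp, mul_comm (2 : ℝ) (2 * N),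
    log_mul (by positivity) two_ne_zero, log_mul two_ne_zero hN'] at hstirling
  rw [sum_range_two_mul_summandTwo, harmonicRemainder, harmonicRemainder]
  push_cast
  rw [log_mul two_ne_zero hN']
  linarith

lemma tendsto_sum_range_two_mul_summandTwo :
    Tendsto (fun N : ℕ ↦ ∑ n ∈ range (2 * N), summandTwo (n + 1)) atTop
      (𝓝 (log √π + log 2 - γ / 2 - 1 / 2)) := by
  have htwo : Tendsto (fun N : ℕ ↦ 2 * N) atTop atTop := tendsto_id.const_mul_atTop' two_pos
  have hstirling := (Stirling.tendsto_stirlingSeq_sqrt_pi.log (by positivity)).comp htwo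
  have hlim := (((hstirling.add_const (log 2)).sub_const (γ / 2)).sub
    (tendsto_harmonicRemainder.div_const 2)).sub (tendsto_mul_harmonicRemainder.comp htwo)
  rw [zero_div, sub_zero] at hlim
  refine hlim.congr' ?_
  filter_upwards [eventually_ne_atTop 0] with N hN
  rw [sum_range_two_mul_summandTwo_eq_stirlingSeq hN]
  simp [mul_assoc]

theorem S_two :
    S 2 = (Real.log (4 * π) - 1 - Real.eulerMascheroniConstant) / 2 := by
  have hS : S 2 = ∑' n : ℕ, summandTwo (n + 1) := tsum_pnat_eq_tsum_succ (f := summandTwo)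
  have hpartial := ((summable_nat_add_iff 1).mpr summable_summandTwo).hasSum.tendsto_sum_nat.comp
    (tendsto_id.const_mul_atTop' two_pos)
  rw [hS, tendsto_nhds_unique hpartial tendsto_sum_range_two_mul_summandTwo,
    show (4 : ℝ) * π = 2 ^ 2 * √π ^ 2 by rw [sq_sqrt pi_pos.le]; ring,
    log_mul (by positivity) (by positivity), log_pow, log_pow]
  push_cast
  ring
end

section
/- Define φ(t) = (t + (ln(2π) - γ)/2)·e^{-t} + e^t·S(e^{-2t}) + 3t/(2·sinh t) (with value (ln(2π)-γ)/2 + S(1) + 3/2 at t = 0). Then φ(t)·e^{t}/(4t) → 1 as t → +∞; i.e., φ(t) ~ 4t e^{-t} as t → ∞. -/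
/-!
Since `e^t φ(t) = t + c + e^{2t} S(e^{-2t}) + 3t / (1 - e^{-2t})` with `c = (ln 2π - γ)/2`,
it suffices that `S(a) = O(a²)` as `a → 0`, i.e. that every term `R(n/a)` of `S` is `O(a²/n²)`,
where `R(x) = log x - ψ(x) - 1/(2x)` (`digammaRemainder`). By `ψ(x+1) = ψ(x) + 1/x`, the
difference `R(x) - R(x+1)` is the error of the trapezoid rule for `∫_x^{x+1} dt/t`, which is
`O(1/x³)`; and `R(x) → 0` because the convexity of `log Γ` traps `ψ(x+1)` between `log x` and
`log (x+1)`. Summing the differences gives `|R(x)| ≤ 1/(3x²)`.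
-/

open Real Filter

/-- `φ(t) = (t + (ln(2π)-γ)/2) e^{-t} + e^t S(e^{-2t}) + 3t/(2 sinh t)`,
with the last term interpreted as `3/2` at `t = 0`. -/
noncomputable def phi (t : ℝ) : ℝ :=
  (t + (Real.log (2 * π) - Real.eulerMascheroniConstant) / 2) * Real.exp (-t)
    + Real.exp t * S (Real.exp (-2 * t))
    + (if t = 0 then 3 / 2 else 3 * t / (2 * Real.sinh t))

open Set Topology

lemma differentiableAt_log_Gamma {x : ℝ} (hx : 0 < x) :
    DifferentiableAt ℝ (fun y => log (Gamma y)) x :=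
  (differentiableAt_Gamma fun m => ((neg_nonpos.mpr (Nat.cast_nonneg m)).trans_lt hx).ne').log
    (Gamma_pos_of_pos hx).ne'

lemma log_Gamma_add_one {x : ℝ} (hx : 0 < x) :
    log (Gamma (x + 1)) = log (Gamma x) + log x := by
  rw [Gamma_add_one hx.ne', log_mul hx.ne' (Gamma_pos_of_pos hx).ne', add_comm]

lemma digamma_add_one {x : ℝ} (hx : 0 < x) : digamma (x + 1) = digamma x + x⁻¹ := by
  rw [digamma, digamma, ← deriv_comp_add_const, ← deriv_log,
    ← deriv_add (differentiableAt_log_Gamma hx) (differentiableAt_log hx.ne')]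
  refine EventuallyEq.deriv_eq ?_
  filter_upwards [eventually_gt_nhds hx] with y hy using log_Gamma_add_one hy

lemma log_le_digamma_add_one {x : ℝ} (hx : 0 < x) : log x ≤ digamma (x + 1) := by
  have h := convexOn_log_Gamma.slope_le_deriv (x := x) (y := x + 1) hx
    (mem_Ioi.2 (by positivity)) (by linarith) (differentiableAt_log_Gamma (by positivity))
  simp only [slope_def_field, Function.comp_apply, log_Gamma_add_one hx, add_sub_cancel_left,
    div_one] at h
  exact h

lemma digamma_add_one_le_log {x : ℝ} (hx : 0 < x) : digamma (x + 1) ≤ log (x + 1) := by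
  have h := convexOn_log_Gamma.deriv_le_slope (x := x + 1) (y := x + 1 + 1)
    (mem_Ioi.2 (by positivity)) (mem_Ioi.2 (by positivity)) (by linarith)
    (differentiableAt_log_Gamma (by positivity))
  simp only [slope_def_field, Function.comp_apply, log_Gamma_add_one (by positivity : 0 < x + 1),
    add_sub_cancel_left, div_one] at h
  exact h

lemma log_add_one_sub_log_le_inv {x : ℝ} (hx : 0 < x) : log (x + 1) - log x ≤ x⁻¹ := by
  rw [← log_div (by linarith) hx.ne']
  calc log ((x + 1) / x) ≤ (x + 1) / x - 1 := log_le_sub_one_of_pos (by positivity)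
    _ = x⁻¹ := by field_simp; ring

lemma log_sub_digamma_mem_Icc {x : ℝ} (hx : 0 < x) : log x - digamma x ∈ Icc 0 x⁻¹ := by
  have hψ : digamma x = digamma (x + 1) - x⁻¹ := by rw [digamma_add_one hx]; ring
  have hlow := log_le_digamma_add_one hx
  have hup := digamma_add_one_le_log hx
  have hlog := log_add_one_sub_log_le_inv hx
  constructor <;> linarith

lemma le_of_hasDerivAt_nonneg {f f' : ℝ → ℝ} {a b : ℝ} (hab : a ≤ b)
    (hf : ∀ x ∈ Icc a b, HasDerivAt f (f' x) x) (hf' : ∀ x ∈ Icc a b, 0 ≤ f' x) : f a ≤ f b :=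
  monotoneOn_of_hasDerivWithinAt_nonneg (convex_Icc a b)
    (fun x hx => (hf x hx).continuousAt.continuousWithinAt)
    (fun x hx => (hf x (interior_subset hx)).hasDerivWithinAt)
    (fun x hx => hf' x (interior_subset hx)) (left_mem_Icc.2 hab) (right_mem_Icc.2 hab) hab

/-- The error of the trapezoid rule for `∫_1^{1+u} dt/t`. -/
lemma trapezoid_defect_mem_Icc {u : ℝ} (hu : 0 ≤ u) :
    u / 2 + u / (2 * (1 + u)) - log (1 + u) ∈ Icc 0 (u ^ 3 / 6) := by
  have hd : ∀ v ∈ Icc 0 u, HasDerivAt (fun v => v / 2 + v / (2 * (1 + v)) - log (1 + v))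
      (v ^ 2 / (2 * (1 + v) ^ 2)) v := by
    intro v hv
    have hv1 : 1 + v ≠ 0 := by linarith [hv.1]
    have h1 : HasDerivAt (fun v : ℝ => 1 + v) 1 v := (hasDerivAt_id v).const_add 1
    have h2 : HasDerivAt (fun v : ℝ => 2 * (1 + v)) 2 v := by simpa using h1.const_mul 2
    refine ((((hasDerivAt_id' v).div_const 2).add ((hasDerivAt_id' v).div h2 (by simpa))).sub
      (h1.log hv1)).congr_deriv ?_
    field_simp
    ring
  refine ⟨?_, ?_⟩
  · simpa using le_of_hasDerivAt_nonneg hu hd fun v _ => by positivity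
  · have hcube : ∀ v ∈ Icc 0 u, HasDerivAt (fun v : ℝ => v ^ 3 / 6) (v ^ 2 / 2) v := fun v _ =>
      ((hasDerivAt_pow 3 v).div_const 6).congr_deriv (by ring)
    have h := le_of_hasDerivAt_nonneg hu (fun v hv => (hcube v hv).sub (hd v hv)) fun v hv => by
      have : 1 ≤ (1 + v) ^ 2 := one_le_pow₀ (by linarith [hv.1])
      rw [sub_nonneg]
      gcongr
      linarith
    norm_num at h
    linarith

noncomputable def digammaRemainder (x : ℝ) : ℝ := log x - digamma x - 1 / (2 * x)

lemma digammaRemainder_sub_add_one {x : ℝ} (hx : 0 < x) :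
    digammaRemainder x - digammaRemainder (x + 1) =
      x⁻¹ / 2 + x⁻¹ / (2 * (1 + x⁻¹)) - log (1 + x⁻¹) := by
  have hlog : log (1 + x⁻¹) = log (x + 1) - log x := by
    rw [← log_div (by positivity) hx.ne', add_div, div_self hx.ne', one_div]
  rw [digammaRemainder, digammaRemainder, digamma_add_one hx, hlog]
  field_simp
  ring

lemma tendsto_digammaRemainder_atTop : Tendsto digammaRemainder atTop (𝓝 0) := by
  have hlog : Tendsto (fun x => log x - digamma x) atTop (𝓝 0) := by
    refine tendsto_of_tendsto_of_tendsto_of_le_of_le' tendsto_const_nhds tendsto_inv_atTop_zero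
      ?_ ?_ <;> filter_upwards [eventually_gt_atTop 0] with x hx
    exacts [(log_sub_digamma_mem_Icc hx).1, (log_sub_digamma_mem_Icc hx).2]
  have hinv : Tendsto (fun x : ℝ => 1 / (2 * x)) atTop (𝓝 0) := by
    simpa only [mul_zero, one_div, mul_inv] using tendsto_inv_atTop_zero.const_mul (2:ℝ)⁻¹
  rw [← sub_zero 0]
  exact hlog.sub hinv

lemma abs_digammaRemainder_le {x : ℝ} (hx : 1 ≤ x) : |digammaRemainder x| ≤ 1 / (3 * x ^ 2) := by
  have hx0 : 0 < x := by linarith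
  have step (y : ℝ) (hy : x ≤ y) :
      |digammaRemainder y - digammaRemainder (y + 1)| ≤ (3 * x)⁻¹ * (y⁻¹ - (y + 1)⁻¹) := by
    have hy0 : 0 < y := by linarith
    have ⟨h0, h1⟩ := trapezoid_defect_mem_Icc (inv_nonneg.2 hy0.le)
    rw [digammaRemainder_sub_add_one hy0, abs_of_nonneg h0]
    have hxy : x * (y + 1) ≤ y * (2 * y) := mul_le_mul hy (by linarith) (by positivity) hy0.le
    calc _ ≤ y⁻¹ ^ 3 / 6 := h1
      _ = 1 / (6 * y ^ 3) := by field_simp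
      _ ≤ 1 / (3 * x * (y * (y + 1))) := one_div_le_one_div_of_le (by positivity) (by nlinarith)
      _ = (3 * x)⁻¹ * (y⁻¹ - (y + 1)⁻¹) := by field_simp; ring
  have partial_sum (n : ℕ) :
      |digammaRemainder x - digammaRemainder (x + n)| ≤ (3 * x)⁻¹ * (x⁻¹ - (x + n)⁻¹) := by
    induction n with
    | zero => simp
    | succ n ih =>
      have := step (x + n) (by linarith [n.cast_nonneg (α := ℝ)])
      push_cast
      rw [← add_assoc]
      calc _ ≤ |digammaRemainder x - digammaRemainder (x + n)|
            + |digammaRemainder (x + n) - digammaRemainder (x + n + 1)| := abs_sub_le _ _ _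
        _ ≤ _ := by linarith
  have hlim : Tendsto (fun n : ℕ => |digammaRemainder x - digammaRemainder (x + n)|) atTop
      (𝓝 |digammaRemainder x - 0|) :=
    ((tendsto_digammaRemainder_atTop.comp
      (tendsto_atTop_add_const_left atTop x tendsto_natCast_atTop_atTop)).const_sub _).abs
  rw [sub_zero] at hlim
  refine le_of_tendsto' hlim fun n => (partial_sum n).trans ?_
  have : 0 < x + n := by positivity
  calc (3 * x)⁻¹ * (x⁻¹ - (x + n)⁻¹) ≤ (3 * x)⁻¹ * x⁻¹ := by gcongr; simp [this.le]
    _ = 1 / (3 * x ^ 2) := by field_simp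

lemma S_eq_tsum_digammaRemainder (a : ℝ) : S a = ∑' n : ℕ+, digammaRemainder (n / a) := by
  refine tsum_congr fun n => ?_
  rw [digammaRemainder, mul_div_assoc', one_div_div]
  ring

lemma hasSum_pnat_one_div_sq : HasSum (fun n : ℕ+ => 1 / (n : ℝ) ^ 2) (π ^ 2 / 6) :=
  (PNat.coe_injective.hasSum_iff (f := fun n : ℕ => 1 / (n : ℝ) ^ 2) fun n hn => by
    rw [Nat.eq_zero_of_not_pos fun h => hn ⟨⟨n, h⟩, rfl⟩]; simp).2 hasSum_zeta_two

lemma abs_S_le {a : ℝ} (ha : 0 < a) (ha1 : a ≤ 1) : |S a| ≤ π ^ 2 / 18 * a ^ 2 := by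
  rw [S_eq_tsum_digammaRemainder, show π ^ 2 / 18 * a ^ 2 = a ^ 2 / 3 * (π ^ 2 / 6) by ring]
  refine tsum_of_norm_bounded (f := fun n : ℕ+ => digammaRemainder (n / a))
    (hasSum_pnat_one_div_sq.mul_left (a ^ 2 / 3)) fun n => ?_
  have hn : (1 : ℝ) ≤ n := Nat.one_le_cast.2 n.pos
  calc ‖digammaRemainder (n / a)‖ ≤ 1 / (3 * (n / a) ^ 2) :=
        abs_digammaRemainder_le (by rw [le_div_iff₀ ha]; linarith)
    _ = a ^ 2 / 3 * (1 / (n : ℝ) ^ 2) := by field_simp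

lemma tendsto_exp_neg_two_mul_atTop : Tendsto (fun t : ℝ => exp (-2 * t)) atTop (𝓝 0) :=
  tendsto_exp_atBot.comp (tendsto_id.const_mul_atTop_of_neg (by norm_num))

lemma tendsto_exp_two_mul_mul_S_exp :
    Tendsto (fun t : ℝ => exp (2 * t) * S (exp (-2 * t))) atTop (𝓝 0) := by
  refine squeeze_zero_norm' ?_
    (by simpa only [mul_zero] using tendsto_exp_neg_two_mul_atTop.const_mul (π ^ 2 / 18))
  filter_upwards [eventually_ge_atTop 0] with t ht
  have hS := abs_S_le (exp_pos (-2 * t)) (exp_le_one_iff.2 (by linarith))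
  calc ‖exp (2 * t) * S (exp (-2 * t))‖ = exp (2 * t) * |S (exp (-2 * t))| := by
        rw [norm_mul, norm_of_nonneg (exp_pos _).le, norm_eq_abs]
    _ ≤ exp (2 * t) * (π ^ 2 / 18 * exp (-2 * t) ^ 2) := by gcongr
    _ = π ^ 2 / 18 * exp (-2 * t) * (exp (2 * t) * exp (-2 * t)) := by ring
    _ = π ^ 2 / 18 * exp (-2 * t) := by rw [← exp_add]; simp

lemma phi_mul_exp {t : ℝ} (ht : 0 < t) :
    phi t * exp t = t + (log (2 * π) - eulerMascheroniConstant) / 2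
      + exp (2 * t) * S (exp (-2 * t)) + 3 * t / (1 - exp (-2 * t)) := by
  have hE : 1 < exp t := one_lt_exp_iff.2 ht
  have h2 : exp (2 * t) = exp t ^ 2 := by rw [← exp_nat_mul]; norm_num
  have hm2 : exp (-2 * t) = (exp t ^ 2)⁻¹ := by rw [← h2, ← exp_neg]; ring_nf
  have hne : exp t ^ 2 - 1 ≠ 0 := by nlinarith
  rw [phi, if_neg ht.ne', sinh_eq]
  generalize S (exp (-2 * t)) = s
  rw [exp_neg, h2, hm2]
  field_simp

theorem phi_asymptotic :
    Tendsto (fun t : ℝ => phi t * Real.exp t / (4 * t)) atTop (nhds 1) := by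
  set c := (log (2 * π) - eulerMascheroniConstant) / 2
  have hlim : Tendsto
      (fun t : ℝ => (1 + (c + exp (2 * t) * S (exp (-2 * t))) * t⁻¹ + 3 / (1 - exp (-2 * t))) / 4)
      atTop (𝓝 ((1 + (c + 0) * 0 + 3 / (1 - 0)) / 4)) :=
    ((tendsto_const_nhds.add ((tendsto_const_nhds.add tendsto_exp_two_mul_mul_S_exp).mul
      tendsto_inv_atTop_zero)).add
      (tendsto_const_nhds.div (tendsto_const_nhds.sub tendsto_exp_neg_two_mul_atTop)
        (by norm_num))).div_const 4
  rw [show ((1 + (c + 0) * 0 + 3 / (1 - 0)) / 4 : ℝ) = 1 by norm_num] at hlim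
  refine hlim.congr' ?_
  filter_upwards [eventually_gt_atTop 0] with t ht
  have hE : 1 - exp (-2 * t) ≠ 0 := sub_ne_zero.2 (exp_lt_one_iff.2 (by linarith)).ne'
  rw [phi_mul_exp ht]
  field_simp
  ring
end
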